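/- arXiv:1507.04658 — 5 statements merged into one kernel-verified Lean document; each statement's English description precedes it below -/
import Mathlib

section
/- For every real α > 2, c · ∫₀^{log(1 + c^{−α/2})} (e^t − 1)^{2/α} dt tends to α/2 as c → 0⁺. -/
open Real Filter MeasureTheory

private lemma real_rpow_add_le {p : ℝ} (a b : ℝ) (ha : 0 ≤ a) (hb : 0 ≤ b)
    (hp : 0 ≤ p) (hp1 : p ≤ 1) : (a + b) ^ p ≤ a ^ p + b ^ p := by
  lift a to NNReal using ha
  lift b to NNReal using hb
  have := NNReal.rpow_add_le_add_rpow a b hp hp1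
  exact_mod_cast this

/-- For every `α > 2`, `c · ∫₀^{log(1 + c^{−α/2})} (e^t − 1)^{2/α} dt → α/2` as `c → 0⁺`. -/
theorem stmt_8 (α : ℝ) (hα : 2 < α) :
    Tendsto (fun c : ℝ =>
        c * ∫ t in (0:ℝ)..Real.log (1 + c ^ (-(α / 2))), (Real.exp t - 1) ^ (2 / α))
      (nhdsWithin 0 (Set.Ioi 0)) (nhds (α / 2)) := by
  have hα0 : (0:ℝ) < α := by linarith
  have hβ0 : (0:ℝ) < 2 / α := by positivity
  have hβ1 : 2 / α ≤ 1 := by rw [div_le_one hα0]; linarith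
  set β : ℝ := 2 / α with hβdef
  have hβne : β ≠ 0 := ne_of_gt hβ0
  have hβinv : 1 / β = α / 2 := by rw [hβdef]; field_simp
  -- key algebraic identity
  have keyid : ∀ c : ℝ, 0 < c → c * (1 + c ^ (-(α / 2))) ^ β = (c ^ (α / 2) + 1) ^ β := by
    intro c hc
    have h1 : c ^ (α / 2) * (1 + c ^ (-(α / 2))) = c ^ (α / 2) + 1 := by
      rw [mul_add, mul_one, ← Real.rpow_add hc, add_neg_cancel, Real.rpow_zero]
    have hMpos : (0:ℝ) < 1 + c ^ (-(α / 2)) := by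
      have := Real.rpow_pos_of_pos hc (-(α / 2)); linarith
    have h2 : ((c ^ (α / 2)) ^ β) = c := by
      rw [← Real.rpow_mul hc.le]
      have : α / 2 * β = 1 := by rw [hβdef]; field_simp
      rw [this, Real.rpow_one]
    calc c * (1 + c ^ (-(α / 2))) ^ β
        = (c ^ (α / 2)) ^ β * (1 + c ^ (-(α / 2))) ^ β := by rw [h2]
      _ = (c ^ (α / 2) * (1 + c ^ (-(α / 2)))) ^ β := by
          rw [← Real.mul_rpow (Real.rpow_pos_of_pos hc _).le hMpos.le]
      _ = (c ^ (α / 2) + 1) ^ β := by rw [h1]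
  -- limit of c ↦ (c^(α/2)+1)^β : → 1
  have hrpow0 : Tendsto (fun c : ℝ => c ^ (α / 2)) (nhds 0) (nhds 0) := by
    have := Real.continuousAt_rpow_const 0 (α / 2) (Or.inr (by positivity))
    simpa [Real.zero_rpow (by positivity : α / 2 ≠ 0)] using this.tendsto
  have hadd1 : Tendsto (fun c : ℝ => c ^ (α / 2) + 1) (nhds 0) (nhds 1) := by
    simpa using hrpow0.add tendsto_const_nhds
  have hpow : Tendsto (fun c : ℝ => (c ^ (α / 2) + 1) ^ β) (nhdsWithin 0 (Set.Ioi 0)) (nhds 1) := by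
    have h3 : ContinuousAt (fun x : ℝ => x ^ β) 1 :=
      Real.continuousAt_rpow_const 1 β (Or.inl one_ne_zero)
    have h4 : Tendsto (fun c : ℝ => (c ^ (α / 2) + 1) ^ β) (nhds 0) (nhds ((1:ℝ) ^ β)) :=
      h3.tendsto.comp hadd1
    rw [Real.one_rpow] at h4
    exact h4.mono_left nhdsWithin_le_nhds
  have hcid : Tendsto (fun c : ℝ => c) (nhdsWithin 0 (Set.Ioi 0)) (nhds 0) :=
    tendsto_id.mono_left nhdsWithin_le_nhds
  -- upper bound function U and its limit
  have hU : Tendsto (fun c : ℝ => α / 2 * ((c ^ (α / 2) + 1) ^ β - c))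
      (nhdsWithin 0 (Set.Ioi 0)) (nhds (α / 2)) := by
    have := (hpow.sub hcid).const_mul (α / 2)
    simpa using this
  -- c * log (1 + c^(-(α/2))) → 0
  have hcL : Tendsto (fun c : ℝ => c * Real.log (1 + c ^ (-(α / 2))))
      (nhdsWithin 0 (Set.Ioi 0)) (nhds 0) := by
    have heq : ∀ c ∈ Set.Ioi (0:ℝ),
        c * Real.log (1 + c ^ (-(α / 2)))
          = -(α / 2) * (Real.log c * c ^ (1:ℝ)) + c * Real.log (c ^ (α / 2) + 1) := by
      intro c hc
      have hc0 : (0:ℝ) < c := hc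
      have h1 : (1:ℝ) + c ^ (-(α / 2)) = c ^ (-(α / 2)) * (c ^ (α / 2) + 1) := by
        rw [mul_add, mul_one, ← Real.rpow_add hc0, neg_add_cancel, Real.rpow_zero]
      have hp1 : (0:ℝ) < c ^ (-(α / 2)) := Real.rpow_pos_of_pos hc0 _
      have hp2 : (0:ℝ) < c ^ (α / 2) + 1 := by
        have := Real.rpow_pos_of_pos hc0 (α / 2); linarith
      rw [h1, Real.log_mul (ne_of_gt hp1) (ne_of_gt hp2), Real.log_rpow hc0, Real.rpow_one]
      ring
    have h1 : Tendsto (fun c : ℝ => -(α / 2) * (Real.log c * c ^ (1:ℝ)))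
        (nhdsWithin 0 (Set.Ioi 0)) (nhds 0) := by
      have := (tendsto_log_mul_rpow_nhdsGT_zero zero_lt_one).const_mul (-(α / 2))
      simpa using this
    have h2 : Tendsto (fun c : ℝ => c * Real.log (c ^ (α / 2) + 1))
        (nhdsWithin 0 (Set.Ioi 0)) (nhds 0) := by
      have hl : Tendsto (fun c : ℝ => Real.log (c ^ (α / 2) + 1))
          (nhdsWithin 0 (Set.Ioi 0)) (nhds 0) := by
        have := (Real.continuousAt_log one_ne_zero).tendsto.comp hadd1
        rw [Real.log_one] at this
        exact this.mono_left nhdsWithin_le_nhds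
      simpa using hcid.mul hl
    have h3 := h1.add h2
    rw [add_zero] at h3
    exact h3.congr' (by filter_upwards [self_mem_nhdsWithin] with c hc using (heq c hc).symm)
  -- lower bound function and its limit
  have hLow : Tendsto (fun c : ℝ =>
      α / 2 * ((c ^ (α / 2) + 1) ^ β - c) - c * Real.log (1 + c ^ (-(α / 2))))
      (nhdsWithin 0 (Set.Ioi 0)) (nhds (α / 2)) := by
    have := hU.sub hcL
    simpa using this
  -- the two bounds, for every positive c
  have hbound : ∀ c ∈ Set.Ioi (0:ℝ),
      (α / 2 * ((c ^ (α / 2) + 1) ^ β - c)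
          - c * Real.log (1 + c ^ (-(α / 2)))
        ≤ c * ∫ t in (0:ℝ)..Real.log (1 + c ^ (-(α / 2))), (Real.exp t - 1) ^ β) ∧
      (c * ∫ t in (0:ℝ)..Real.log (1 + c ^ (-(α / 2))), (Real.exp t - 1) ^ β
        ≤ α / 2 * ((c ^ (α / 2) + 1) ^ β - c)) := by
    intro c hc
    have hc0 : (0:ℝ) < c := hc
    set L : ℝ := Real.log (1 + c ^ (-(α / 2))) with hLdef
    have hMpos : (0:ℝ) < c ^ (-(α / 2)) := Real.rpow_pos_of_pos hc0 _
    have h1M : (1:ℝ) < 1 + c ^ (-(α / 2)) := by linarith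
    have hL0 : (0:ℝ) ≤ L := Real.log_nonneg h1M.le
    have hcontf : Continuous fun t : ℝ => (Real.exp t - 1) ^ β :=
      (Real.continuous_exp.sub continuous_const).rpow_const fun x => Or.inr hβ0.le
    have hcontg : Continuous fun t : ℝ => Real.exp (β * t) :=
      Real.continuous_exp.comp (continuous_const.mul continuous_id)
    have hif : IntervalIntegrable (fun t : ℝ => (Real.exp t - 1) ^ β) volume 0 L :=
      hcontf.intervalIntegrable 0 L
    have hig : IntervalIntegrable (fun t : ℝ => Real.exp (β * t)) volume 0 L :=
      hcontg.intervalIntegrable 0 L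
    have hig' : IntervalIntegrable (fun t : ℝ => Real.exp (β * t) - 1) volume 0 L :=
      hig.sub intervalIntegrable_const
    have hIg : (∫ t in (0:ℝ)..L, Real.exp (β * t)) = (Real.exp (β * L) - 1) / β := by
      rw [intervalIntegral.integral_comp_mul_left Real.exp hβne]
      simp [integral_exp, smul_eq_mul, div_eq_inv_mul]
    have hexpβL : Real.exp (β * L) = (1 + c ^ (-(α / 2))) ^ β := by
      rw [hLdef, mul_comm, Real.exp_mul, Real.exp_log (by linarith)]
    have hval : c * ((Real.exp (β * L) - 1) / β) = α / 2 * ((c ^ (α / 2) + 1) ^ β - c) := by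
      rw [hexpβL]
      calc c * (((1 + c ^ (-(α / 2))) ^ β - 1) / β)
          = (c * (1 + c ^ (-(α / 2))) ^ β - c) * (1 / β) := by ring
        _ = ((c ^ (α / 2) + 1) ^ β - c) * (α / 2) := by rw [keyid c hc0, hβinv]
        _ = α / 2 * ((c ^ (α / 2) + 1) ^ β - c) := by ring
    constructor
    · -- lower bound
      have hpt : ∀ t ∈ Set.Icc (0:ℝ) L, Real.exp (β * t) - 1 ≤ (Real.exp t - 1) ^ β := by
        intro t ht
        have ht0 : 0 ≤ t := ht.1
        have he1 : (1:ℝ) ≤ Real.exp t := Real.one_le_exp ht0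
        have hmul : Real.exp (β * t) = Real.exp t ^ β := by rw [mul_comm, Real.exp_mul]
        rw [hmul]
        have h2 := real_rpow_add_le (Real.exp t - 1) 1 (by linarith) zero_le_one hβ0.le hβ1
        have h3 : Real.exp t - 1 + 1 = Real.exp t := by ring
        rw [h3, Real.one_rpow] at h2
        linarith
      have hmono := intervalIntegral.integral_mono_on hL0 hig' hif hpt
      have hIg' : (∫ t in (0:ℝ)..L, (Real.exp (β * t) - 1))
          = (Real.exp (β * L) - 1) / β - L := by
        rw [intervalIntegral.integral_sub hig intervalIntegrable_const, hIg]
        simp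
      rw [hIg'] at hmono
      have h4 := mul_le_mul_of_nonneg_left hmono hc0.le
      have h5 : c * ((Real.exp (β * L) - 1) / β - L)
          = α / 2 * ((c ^ (α / 2) + 1) ^ β - c) - c * L := by rw [← hval]; ring
      linarith [h4, h5.symm.le, h5.le]
    · -- upper bound
      have hpt : ∀ t ∈ Set.Icc (0:ℝ) L, (Real.exp t - 1) ^ β ≤ Real.exp (β * t) := by
        intro t ht
        have ht0 : 0 ≤ t := ht.1
        have he1 : (1:ℝ) ≤ Real.exp t := Real.one_le_exp ht0
        have hmul : Real.exp (β * t) = Real.exp t ^ β := by rw [mul_comm, Real.exp_mul]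
        rw [hmul]
        exact Real.rpow_le_rpow (by linarith) (by linarith) hβ0.le
      have hmono := intervalIntegral.integral_mono_on hL0 hif hig hpt
      rw [hIg] at hmono
      have h4 := mul_le_mul_of_nonneg_left hmono hc0.le
      rw [hval] at h4
      exact h4
  refine tendsto_of_tendsto_of_tendsto_of_le_of_le' hLow hU ?_ ?_
  · filter_upwards [self_mem_nhdsWithin] with c hc using (hbound c hc).1
  · filter_upwards [self_mem_nhdsWithin] with c hc using (hbound c hc).2
end

section
/- (Asymptotic mmW UDN spectral-efficiency bound limit.) Fix reals α > 2, c > 0, K > 0 and ρ' ≥ 0. Then (1/log L) · ∫₀^∞ (1 − e^{−K·(1 + (ρ'/L)·(e^t − 1)^{2/α})}) · max(0, 1 − (c/L)·(e^t − 1)^{2/α}) dt tends to (α/2)·(1 − e^{−K}) as L → ∞. -/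
/-!
With `q = 2/α ∈ (0, 1]` and `C = 1 - e^{-K}`, since `(e^t - 1)^q ≤ e^{qt}` the first factor of
the integrand lies between `C` and `C + (Kρ'/L) e^{qt}` and the second between
`1 - (c/L) e^{qt}` and `1`; the second factor vanishes past the cutoff
`T = log (1 + (L/c)^{1/q})`, where `(e^t - 1)^q = L/c`. Integrating these bounds over
`[0, T]`, and using `L/c ≤ e^{qT} ≤ 1 + L/c` (subadditivity of `x ↦ x^q`), the integral is
`C T + O(1)`, while `T = q⁻¹ log L + O(1)`.
-/

open Real Filter MeasureTheory Set Topology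

lemma tendsto_one_div_log_mul_of_bounds {g : ℝ → ℝ} {a D₁ D₂ : ℝ}
    (hlo : ∀ᶠ L in atTop, a * log L + D₁ ≤ g L) (hhi : ∀ᶠ L in atTop, g L ≤ a * log L + D₂) :
    Tendsto (fun L => 1 / log L * g L) atTop (𝓝 a) := by
  have hlim : ∀ D : ℝ, Tendsto (fun L => 1 / log L * (a * log L + D)) atTop (𝓝 a) := by
    intro D
    have h : Tendsto (fun L => a + D * (log L)⁻¹) atTop (𝓝 (a + D * 0)) :=
      tendsto_const_nhds.add (tendsto_log_atTop.inv_tendsto_atTop.const_mul D)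
    rw [mul_zero, add_zero] at h
    refine h.congr' ?_
    filter_upwards [eventually_gt_atTop 1] with L hL
    field_simp [(log_pos hL).ne']
  refine tendsto_of_tendsto_of_tendsto_of_le_of_le' (hlim D₁) (hlim D₂) ?_ ?_
  · filter_upwards [hlo, eventually_gt_atTop 1] with L hL hL1
    exact mul_le_mul_of_nonneg_left hL (one_div_nonneg.mpr (log_pos hL1).le)
  · filter_upwards [hhi, eventually_gt_atTop 1] with L hL hL1
    exact mul_le_mul_of_nonneg_left hL (one_div_nonneg.mpr (log_pos hL1).le)

lemma rpow_exp_sub_one_le_exp_mul {q t : ℝ} (hq : 0 ≤ q) (ht : 0 ≤ t) :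
    (exp t - 1) ^ q ≤ exp (q * t) := by
  rw [mul_comm, exp_mul]
  exact rpow_le_rpow (by linarith [one_le_exp ht]) (by linarith) hq

lemma integral_exp_mul {q : ℝ} (hq : q ≠ 0) (T : ℝ) :
    ∫ t in (0 : ℝ)..T, exp (q * t) = (exp (q * T) - 1) / q := by
  rw [intervalIntegral.integral_comp_mul_left (fun t => exp t) hq, integral_exp, mul_zero,
    exp_zero, smul_eq_mul, inv_mul_eq_div]

lemma one_sub_exp_neg_nonneg {x : ℝ} (hx : 0 ≤ x) : 0 ≤ 1 - exp (-x) := by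
  rw [sub_nonneg, exp_le_one_iff, neg_nonpos]
  exact hx

lemma one_sub_exp_neg_add_le {a b : ℝ} (ha : 0 ≤ a) (hb : 0 ≤ b) :
    1 - exp (-(b + a)) ≤ 1 - exp (-b) + a := by
  have h₁ : 1 - exp (-a) ≤ a := by linarith [add_one_le_exp (-a)]
  have h₂ : exp (-a) ≤ 1 := exp_le_one_iff.mpr (by linarith)
  have h₃ : exp (-b) ≤ 1 := exp_le_one_iff.mpr (by linarith)
  rw [neg_add, exp_add]
  nlinarith [exp_pos (-b)]

/-- `seIntegrand (2/α) c K ρ' L` is the integrand of the statement. -/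
noncomputable def seIntegrand (q c K ρ L t : ℝ) : ℝ :=
  (1 - exp (-(K * (1 + ρ / L * (exp t - 1) ^ q)))) * max 0 (1 - c / L * (exp t - 1) ^ q)

noncomputable def seCutoff (q c L : ℝ) : ℝ := log (1 + (L / c) ^ q⁻¹)

section

variable {q c K ρ L : ℝ}

lemma exp_seCutoff (hc : 0 < c) (hL : 0 ≤ L) : exp (seCutoff q c L) = 1 + (L / c) ^ q⁻¹ :=
  exp_log (by positivity)

lemma seCutoff_nonneg (hc : 0 < c) (hL : 0 ≤ L) : 0 ≤ seCutoff q c L :=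
  log_nonneg (le_add_of_nonneg_right (by positivity))

lemma exp_mul_seCutoff (hc : 0 < c) (hL : 0 ≤ L) :
    exp (q * seCutoff q c L) = (1 + (L / c) ^ q⁻¹) ^ q := by
  rw [mul_comm, exp_mul, exp_seCutoff hc hL]

lemma div_le_exp_mul_seCutoff (hq : 0 < q) (hc : 0 < c) (hL : 0 ≤ L) :
    L / c ≤ exp (q * seCutoff q c L) := by
  rw [exp_mul_seCutoff hc hL]
  calc L / c = ((L / c) ^ q⁻¹) ^ q := (rpow_inv_rpow (by positivity) hq.ne').symm
    _ ≤ (1 + (L / c) ^ q⁻¹) ^ q := rpow_le_rpow (by positivity) (by linarith) hq.le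

lemma exp_mul_seCutoff_le (hq : 0 < q) (hq1 : q ≤ 1) (hc : 0 < c) (hL : 0 ≤ L) :
    exp (q * seCutoff q c L) ≤ 1 + L / c := by
  rw [exp_mul_seCutoff hc hL]
  calc (1 + (L / c) ^ q⁻¹) ^ q ≤ 1 ^ q + ((L / c) ^ q⁻¹) ^ q :=
        rpow_add_le_add_rpow zero_le_one (by positivity) hq.le hq1
    _ = 1 + L / c := by rw [one_rpow, rpow_inv_rpow (by positivity) hq.ne']

lemma inv_mul_log_sub_le_seCutoff (hq : 0 < q) (hc : 0 < c) (hL : 0 < L) :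
    q⁻¹ * (log L - log c) ≤ seCutoff q c L := by
  rw [← log_div hL.ne' hc.ne', inv_mul_le_iff₀ hq, log_le_iff_le_exp (by positivity)]
  exact div_le_exp_mul_seCutoff hq hc hL.le

lemma seCutoff_le_inv_mul_log_add (hq : 0 < q) (hq1 : q ≤ 1) (hc : 0 < c) (hL : 1 ≤ L) :
    seCutoff q c L ≤ q⁻¹ * (log L + log (1 + c⁻¹)) := by
  rw [← log_mul (by positivity) (by positivity), le_inv_mul_iff₀ hq,
    le_log_iff_exp_le (by positivity)]
  calc exp (q * seCutoff q c L) ≤ 1 + L / c := exp_mul_seCutoff_le hq hq1 hc (by linarith)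
    _ ≤ L * (1 + c⁻¹) := by rw [mul_add, mul_one, div_eq_mul_inv]; linarith

lemma seIntegrand_eq_zero_of_seCutoff_lt {t : ℝ} (hq : 0 < q) (hc : 0 < c) (hL : 0 < L)
    (ht : seCutoff q c L < t) : seIntegrand q c K ρ L t = 0 := by
  have hexp : 1 + (L / c) ^ q⁻¹ < exp t := exp_seCutoff hc hL.le ▸ exp_lt_exp.mpr ht
  have hx : L / c ≤ (exp t - 1) ^ q :=
    calc L / c = ((L / c) ^ q⁻¹) ^ q := (rpow_inv_rpow (by positivity) hq.ne').symm
      _ ≤ (exp t - 1) ^ q := rpow_le_rpow (by positivity) (by linarith) hq.le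
  have hcx : 1 ≤ c / L * (exp t - 1) ^ q := by
    rwa [← div_le_iff₀' (by positivity), one_div_div]
  rw [seIntegrand, max_eq_left (by linarith), mul_zero]

lemma continuous_seIntegrand (hq : 0 ≤ q) : Continuous (seIntegrand q c K ρ L) := by
  have hx : Continuous fun t => (exp t - 1) ^ q :=
    (continuous_exp.sub continuous_const).rpow_const fun _ => Or.inr hq
  unfold seIntegrand
  fun_prop

lemma setIntegral_Ioi_seIntegrand (hq : 0 < q) (hc : 0 < c) (hL : 0 < L) :
    ∫ t in Ioi (0 : ℝ), seIntegrand q c K ρ L t =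
      ∫ t in (0 : ℝ)..seCutoff q c L, seIntegrand q c K ρ L t := by
  rw [intervalIntegral.integral_of_le (seCutoff_nonneg hc hL.le)]
  refine setIntegral_eq_of_subset_of_forall_sdiff_eq_zero measurableSet_Ioi Ioc_subset_Ioi_self
    fun t ht => ?_
  exact seIntegrand_eq_zero_of_seCutoff_lt hq hc hL
    (lt_of_not_ge fun htT => ht.2 ⟨ht.1, htT⟩)

variable {t : ℝ}

lemma seIntegrand_le (hq : 0 ≤ q) (hK : 0 ≤ K) (hρ : 0 ≤ ρ) (hc : 0 ≤ c) (hL : 0 ≤ L)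
    (ht : 0 ≤ t) : seIntegrand q c K ρ L t ≤ 1 - exp (-K) + K * ρ / L * exp (q * t) := by
  have hx : 0 ≤ (exp t - 1) ^ q := rpow_nonneg (by linarith [one_le_exp ht]) q
  have hA : 0 ≤ 1 - exp (-(K * (1 + ρ / L * (exp t - 1) ^ q))) :=
    one_sub_exp_neg_nonneg (by positivity)
  have hB : max 0 (1 - c / L * (exp t - 1) ^ q) ≤ 1 :=
    max_le zero_le_one (by linarith [mul_nonneg (div_nonneg hc hL) hx])
  calc seIntegrand q c K ρ L t ≤ 1 - exp (-(K * (1 + ρ / L * (exp t - 1) ^ q))) :=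
        mul_le_of_le_one_right hA hB
    _ = 1 - exp (-(K + K * (ρ / L * (exp t - 1) ^ q))) := by rw [mul_add, mul_one]
    _ ≤ 1 - exp (-K) + K * (ρ / L * (exp t - 1) ^ q) := one_sub_exp_neg_add_le (by positivity) hK
    _ ≤ 1 - exp (-K) + K * ρ / L * exp (q * t) := by
        rw [mul_div_assoc, mul_assoc]
        gcongr
        exact rpow_exp_sub_one_le_exp_mul hq ht

lemma le_seIntegrand (hq : 0 ≤ q) (hK : 0 ≤ K) (hρ : 0 ≤ ρ) (hc : 0 ≤ c) (hL : 0 ≤ L)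
    (ht : 0 ≤ t) : (1 - exp (-K)) * (1 - c / L * exp (q * t)) ≤ seIntegrand q c K ρ L t := by
  have hx : 0 ≤ (exp t - 1) ^ q := rpow_nonneg (by linarith [one_le_exp ht]) q
  have hC : 0 ≤ 1 - exp (-K) := one_sub_exp_neg_nonneg hK
  have hCA : 1 - exp (-K) ≤ 1 - exp (-(K * (1 + ρ / L * (exp t - 1) ^ q))) := by
    gcongr
    exact le_mul_of_one_le_right hK (le_add_of_nonneg_right (by positivity))
  have hB : 1 - c / L * exp (q * t) ≤ max 0 (1 - c / L * (exp t - 1) ^ q) := by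
    refine le_max_of_le_right (sub_le_sub_left ?_ 1)
    exact mul_le_mul_of_nonneg_left (rpow_exp_sub_one_le_exp_mul hq ht) (div_nonneg hc hL)
  calc (1 - exp (-K)) * (1 - c / L * exp (q * t))
      ≤ (1 - exp (-K)) * max 0 (1 - c / L * (exp t - 1) ^ q) := mul_le_mul_of_nonneg_left hB hC
    _ ≤ seIntegrand q c K ρ L t := mul_le_mul_of_nonneg_right hCA (le_max_left _ _)

lemma setIntegral_seIntegrand_le (hq : 0 < q) (hq1 : q ≤ 1) (hK : 0 ≤ K) (hρ : 0 ≤ ρ)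
    (hc : 0 < c) (hL : 0 < L) :
    ∫ t in Ioi (0 : ℝ), seIntegrand q c K ρ L t ≤
      (1 - exp (-K)) * seCutoff q c L + K * ρ / (q * c) := by
  set T := seCutoff q c L
  have hT : 0 ≤ T := seCutoff_nonneg hc hL.le
  have hexpT : exp (q * T) - 1 ≤ L / c := by linarith [exp_mul_seCutoff_le hq hq1 hc hL.le]
  rw [setIntegral_Ioi_seIntegrand hq hc hL]
  calc ∫ t in (0 : ℝ)..T, seIntegrand q c K ρ L t
      ≤ ∫ t in (0 : ℝ)..T, (1 - exp (-K) + K * ρ / L * exp (q * t)) :=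
        intervalIntegral.integral_mono_on hT
          ((continuous_seIntegrand hq.le).intervalIntegrable _ _)
          (Continuous.intervalIntegrable (by fun_prop) _ _)
          fun t ht => seIntegrand_le hq.le hK hρ hc.le hL.le ht.1
    _ = (1 - exp (-K)) * T + K * ρ / L * ((exp (q * T) - 1) / q) := by
        rw [intervalIntegral.integral_add intervalIntegrable_const
          (Continuous.intervalIntegrable (by fun_prop) _ _), intervalIntegral.integral_const,
          intervalIntegral.integral_const_mul, integral_exp_mul hq.ne', sub_zero, smul_eq_mul,
          mul_comm T]
    _ ≤ (1 - exp (-K)) * T + K * ρ / L * (L / c / q) := by gcongr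
    _ = (1 - exp (-K)) * T + K * ρ / (q * c) := by field_simp

lemma le_setIntegral_seIntegrand (hq : 0 < q) (hq1 : q ≤ 1) (hK : 0 ≤ K) (hρ : 0 ≤ ρ)
    (hc : 0 < c) (hL : 0 < L) :
    (1 - exp (-K)) * seCutoff q c L - (1 - exp (-K)) * q⁻¹ ≤
      ∫ t in Ioi (0 : ℝ), seIntegrand q c K ρ L t := by
  set T := seCutoff q c L
  have hT : 0 ≤ T := seCutoff_nonneg hc hL.le
  have hC : 0 ≤ 1 - exp (-K) := one_sub_exp_neg_nonneg hK
  have hexpT : exp (q * T) - 1 ≤ L / c := by linarith [exp_mul_seCutoff_le hq hq1 hc hL.le]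
  have htail : c / L * ((exp (q * T) - 1) / q) ≤ q⁻¹ :=
    calc c / L * ((exp (q * T) - 1) / q) ≤ c / L * (L / c / q) := by gcongr
      _ = q⁻¹ := by field_simp
  rw [setIntegral_Ioi_seIntegrand hq hc hL]
  calc (1 - exp (-K)) * T - (1 - exp (-K)) * q⁻¹
      ≤ (1 - exp (-K)) * (T - c / L * ((exp (q * T) - 1) / q)) := by rw [mul_sub]; gcongr
    _ = ∫ t in (0 : ℝ)..T, (1 - exp (-K)) * (1 - c / L * exp (q * t)) := by
        rw [intervalIntegral.integral_const_mul, intervalIntegral.integral_sub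
          intervalIntegrable_const (Continuous.intervalIntegrable (by fun_prop) _ _),
          intervalIntegral.integral_const, intervalIntegral.integral_const_mul,
          integral_exp_mul hq.ne', sub_zero, smul_eq_mul, mul_one]
    _ ≤ ∫ t in (0 : ℝ)..T, seIntegrand q c K ρ L t :=
        intervalIntegral.integral_mono_on hT (Continuous.intervalIntegrable (by fun_prop) _ _)
          ((continuous_seIntegrand hq.le).intervalIntegrable _ _)
          fun t ht => le_seIntegrand hq.le hK hρ hc.le hL.le ht.1

lemma tendsto_one_div_log_mul_setIntegral_seIntegrand (hq : 0 < q) (hq1 : q ≤ 1) (hK : 0 ≤ K)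
    (hρ : 0 ≤ ρ) (hc : 0 < c) :
    Tendsto (fun L => 1 / log L * ∫ t in Ioi (0 : ℝ), seIntegrand q c K ρ L t) atTop
      (𝓝 (q⁻¹ * (1 - exp (-K)))) := by
  have hC : 0 ≤ 1 - exp (-K) := one_sub_exp_neg_nonneg hK
  refine tendsto_one_div_log_mul_of_bounds
    (D₁ := -(q⁻¹ * (1 - exp (-K)) * log c) - (1 - exp (-K)) * q⁻¹)
    (D₂ := q⁻¹ * (1 - exp (-K)) * log (1 + c⁻¹) + K * ρ / (q * c)) ?_ ?_
  · filter_upwards [eventually_ge_atTop 1] with L hL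
    have hT := mul_le_mul_of_nonneg_left (inv_mul_log_sub_le_seCutoff hq hc (by linarith)) hC
    linarith [le_setIntegral_seIntegrand (ρ := ρ) hq hq1 hK hρ hc (by linarith : 0 < L)]
  · filter_upwards [eventually_ge_atTop 1] with L hL
    have hT := mul_le_mul_of_nonneg_left (seCutoff_le_inv_mul_log_add hq hq1 hc hL) hC
    linarith [setIntegral_seIntegrand_le (ρ := ρ) hq hq1 hK hρ hc (by linarith : 0 < L)]

end

/-- Asymptotic mmW UDN spectral-efficiency bound limit. For `α > 2`, `c > 0`, `K > 0`, `ρ' ≥ 0`: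
`(1/log L) · ∫₀^∞ (1 − e^{−K(1 + (ρ'/L)(e^t − 1)^{2/α})}) · max(0, 1 − (c/L)(e^t − 1)^{2/α}) dt`
tends to `(α/2)(1 − e^{−K})` as `L → ∞`. -/
theorem stmt_10 (α c K ρ' : ℝ) (hα : 2 < α) (hc : 0 < c) (hK : 0 < K) (hρ' : 0 ≤ ρ') :
    Tendsto (fun L : ℝ =>
        (1 / Real.log L) *
          ∫ t in Set.Ioi (0:ℝ),
            (1 - Real.exp (-(K * (1 + (ρ' / L) * (Real.exp t - 1) ^ (2 / α))))) *
              max 0 (1 - (c / L) * (Real.exp t - 1) ^ (2 / α)))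
      atTop (nhds ((α / 2) * (1 - Real.exp (-K)))) := by
  have hq : 0 < 2 / α := by positivity
  have hq1 : 2 / α ≤ 1 := (div_le_one (by positivity)).mpr hα.le
  have h := tendsto_one_div_log_mul_setIntegral_seIntegrand hq hq1 hK.le hρ' hc
  rw [inv_div] at h
  exact h
end

section
/- (Asymptotic mmW UDN spectral efficiency, Theorem 2.) Fix reals α > 2, K > 0, ρ' ≥ 0, c₁ ≥ c₂ > 0 and L₀ > 1. For i = 1, 2 define f_i(L) := ∫₀^∞ (1 − e^{−K·(1 + (ρ'/L)·(e^t − 1)^{2/α})}) · max(0, 1 − (c_i/L)·(e^t − 1)^{2/α}) dt. If γ : ℝ → ℝ satisfies f₁(L) ≤ γ(L) ≤ f₂(L) for all L ≥ L₀, then γ(L)/log L → (α/2)·(1 − e^{−K}) as L → ∞; that is, γ(L) is asymptotically equal to (α/2)·(1 − e^{−K})·log L. -/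
/-!
Write `q = 2/α` and `T_c(L) = log (1 + (L/c)^(1/q))`: the second factor of the integrand is
positive exactly for `t < T_c(L)`. The first factor lies between `1 - e^{-K}` and
`1 - e^{-K} + (Kρ'/L) e^{qt}`, and the error term integrates to `O(1)` over `[0, T_c(L)]`, so
`f₂(L) ≤ (1 - e^{-K}) T_{c₂}(L) + O(1)`. Below the cutoff `T_{c₁ log L}(L)` the second factor is
at least `1 - 1/log L`, so `f₁(L) ≥ (1 - e^{-K})(1 - 1/log L) T_{c₁ log L}(L)`. Both cutoffs are
`(α/2) log L + o(log L)`.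
-/

open Real Filter MeasureTheory Topology

theorem rpow_exp_sub_one_le_iff {q y t : ℝ} (hq : 0 < q) (hy : 0 ≤ y) (ht : 0 ≤ t) :
    (exp t - 1) ^ q ≤ y ↔ t ≤ log (1 + y ^ q⁻¹) := by
  have ht' : 0 ≤ exp t - 1 := by linarith [one_le_exp ht]
  rw [← le_rpow_inv_iff_of_pos ht' hy hq, le_log_iff_exp_le (by positivity)]
  constructor <;> intro <;> linarith

theorem one_sub_exp_neg_nonneg_s11 {K : ℝ} (hK : 0 ≤ K) : 0 ≤ 1 - exp (-K) :=
  sub_nonneg.2 (exp_le_one_iff.2 (neg_nonpos.2 hK))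

theorem one_sub_exp_neg_le_one_sub_exp_neg_mul {K y : ℝ} (hK : 0 ≤ K) (hy : 0 ≤ y) :
    1 - exp (-K) ≤ 1 - exp (-(K * (1 + y))) := by
  have : exp (-(K * (1 + y))) ≤ exp (-K) := exp_le_exp.2 (by nlinarith)
  linarith

theorem one_sub_exp_neg_mul_le {K y : ℝ} (hK : 0 ≤ K) (hy : 0 ≤ y) :
    1 - exp (-(K * (1 + y))) ≤ 1 - exp (-K) + K * y := by
  have hsplit : exp (-(K * (1 + y))) = exp (-K) * exp (-(K * y)) := by
    rw [← exp_add]; ring_nf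
  have h1 : 1 - K * y ≤ exp (-(K * y)) := by linarith [add_one_le_exp (-(K * y))]
  have h2 : exp (-(K * y)) ≤ 1 := exp_le_one_iff.2 (by nlinarith)
  rw [hsplit]
  nlinarith [exp_pos (-K), one_sub_exp_neg_nonneg_s11 hK]

theorem log_one_add_rpow_bounds {y p : ℝ} (hy : 1 ≤ y) (hp : 0 ≤ p) :
    p * log y ≤ log (1 + y ^ p) ∧ log (1 + y ^ p) ≤ p * log y + log 2 := by
  have hy0 : 0 < y := by linarith
  have hyp : 1 ≤ y ^ p := one_le_rpow hy hp
  rw [← log_rpow hy0]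
  refine ⟨log_le_log (by positivity) (by linarith), ?_⟩
  rw [← log_mul (by positivity) (by norm_num)]
  exact log_le_log (by positivity) (by linarith)

theorem tendsto_log_one_add_div_rpow_div_log {p : ℝ} (hp : 0 ≤ p) {b : ℝ → ℝ}
    (hb : Tendsto (fun L => log (b L) / log L) atTop (𝓝 0)) (hb0 : ∀ᶠ L in atTop, 0 < b L) :
    Tendsto (fun L => log (1 + (L / b L) ^ p) / log L) atTop (𝓝 p) := by
  have hlower : Tendsto (fun L => p * (1 - log (b L) / log L)) atTop (𝓝 p) := by
    simpa using (hb.const_sub 1).const_mul p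
  have hupper : Tendsto (fun L => p * (1 - log (b L) / log L) + log 2 * (log L)⁻¹) atTop
      (𝓝 p) := by
    simpa using hlower.add (tendsto_log_atTop.inv_tendsto_atTop.const_mul (log 2))
  have hsandwich : ∀ᶠ L in atTop,
      p * (1 - log (b L) / log L) ≤ log (1 + (L / b L) ^ p) / log L ∧
      log (1 + (L / b L) ^ p) / log L ≤ p * (1 - log (b L) / log L) + log 2 * (log L)⁻¹ := by
    filter_upwards [eventually_gt_atTop 1, hb0, hb.eventually (gt_mem_nhds one_pos)]
      with L hL hbL hb1
    have hlogL : 0 < log L := log_pos hL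
    have hbL' : b L ≤ L := by
      rw [div_lt_one hlogL, log_lt_log_iff hbL (by linarith)] at hb1
      exact hb1.le
    have hlogy : log (L / b L) = log L * (1 - log (b L) / log L) := by
      rw [log_div (by linarith) hbL.ne']
      field_simp
    obtain ⟨h1, h2⟩ := log_one_add_rpow_bounds ((one_le_div hbL).2 hbL') hp
    rw [hlogy] at h1 h2
    constructor
    · rw [le_div_iff₀ hlogL]; linarith
    · rw [div_le_iff₀ hlogL, add_mul, inv_mul_cancel_right₀ hlogL.ne']; linarith
  exact tendsto_of_tendsto_of_tendsto_of_le_of_le' hlower hupper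
    (hsandwich.mono fun _ h => h.1) (hsandwich.mono fun _ h => h.2)

noncomputable def sandwichIntegrand (K ρ' c q L t : ℝ) : ℝ :=
  (1 - exp (-(K * (1 + (ρ' / L) * (exp t - 1) ^ q)))) * max 0 (1 - (c / L) * (exp t - 1) ^ q)

section
variable {K ρ' c q L t : ℝ}

theorem exp_sub_one_rpow_nonneg (ht : 0 ≤ t) : 0 ≤ (exp t - 1) ^ q :=
  rpow_nonneg (by linarith [one_le_exp ht]) q

theorem continuous_sandwichIntegrand (hq : 0 ≤ q) : Continuous (sandwichIntegrand K ρ' c q L) := by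
  have := continuous_rpow_const hq
  unfold sandwichIntegrand
  fun_prop

theorem sandwichIntegrand_eq_zero (hc : 0 < c) (hq : 0 < q) (hL : 0 < L)
    (ht : log (1 + (L / c) ^ q⁻¹) < t) : sandwichIntegrand K ρ' c q L t = 0 := by
  have hcut : 0 ≤ log (1 + (L / c) ^ q⁻¹) :=
    log_nonneg (by linarith [rpow_nonneg (div_pos hL hc).le q⁻¹])
  have hx : L / c < (exp t - 1) ^ q := by
    rw [← not_le, rpow_exp_sub_one_le_iff hq (div_pos hL hc).le (by linarith)]
    exact not_le.2 ht
  have : 1 - (c / L) * (exp t - 1) ^ q ≤ 0 := by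
    rw [sub_nonpos, div_mul_eq_mul_div, one_le_div hL, ← div_le_iff₀' hc]
    exact hx.le
  rw [sandwichIntegrand, max_eq_left this, mul_zero]

theorem integrableOn_sandwichIntegrand (hc : 0 < c) (hq : 0 < q) (hL : 0 < L) :
    IntegrableOn (sandwichIntegrand K ρ' c q L) (Set.Ioi 0) :=
  (continuous_sandwichIntegrand hq.le).integrableOn_Ioc.of_forall_sdiff_eq_zero measurableSet_Ioi
    fun _ ht => sandwichIntegrand_eq_zero hc hq hL (not_le.1 fun h => ht.2 ⟨ht.1, h⟩)

theorem sandwichIntegrand_nonneg (hK : 0 ≤ K) (hρ' : 0 ≤ ρ') (hL : 0 < L) (ht : 0 ≤ t) :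
    0 ≤ sandwichIntegrand K ρ' c q L t := by
  have hx := exp_sub_one_rpow_nonneg (q := q) ht
  refine mul_nonneg ((one_sub_exp_neg_nonneg_s11 hK).trans ?_) (le_max_left _ _)
  exact one_sub_exp_neg_le_one_sub_exp_neg_mul hK (by positivity)

theorem mul_le_sandwichIntegrand {ε : ℝ} (hK : 0 ≤ K) (hρ' : 0 ≤ ρ') (hL : 0 < L) (ht : 0 ≤ t)
    (hε : ε ≤ 1) (hcut : (c / L) * (exp t - 1) ^ q ≤ ε) :
    (1 - exp (-K)) * (1 - ε) ≤ sandwichIntegrand K ρ' c q L t := by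
  have hx := exp_sub_one_rpow_nonneg (q := q) ht
  have hA := one_sub_exp_neg_le_one_sub_exp_neg_mul hK
    (by positivity : 0 ≤ ρ' / L * (exp t - 1) ^ q)
  exact mul_le_mul hA
    ((by linarith : 1 - ε ≤ 1 - (c / L) * (exp t - 1) ^ q).trans (le_max_right _ _))
    (by linarith) ((one_sub_exp_neg_nonneg_s11 hK).trans hA)

theorem sandwichIntegrand_le (hK : 0 ≤ K) (hρ' : 0 ≤ ρ') (hc : 0 ≤ c) (hq : 0 ≤ q) (hL : 0 < L)
    (ht : 0 ≤ t) : sandwichIntegrand K ρ' c q L t ≤ 1 - exp (-K) + K * ρ' / L * exp (q * t) := by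
  have hx0 : 0 ≤ exp t - 1 := by linarith [one_le_exp ht]
  have hx : (exp t - 1) ^ q ≤ exp (q * t) := by
    rw [mul_comm, exp_mul]
    exact rpow_le_rpow hx0 (by linarith) hq
  have hy : 0 ≤ ρ' / L * (exp t - 1) ^ q := by positivity
  have hB : max 0 (1 - (c / L) * (exp t - 1) ^ q) ≤ 1 :=
    max_le zero_le_one (by linarith [show 0 ≤ (c / L) * (exp t - 1) ^ q by positivity])
  calc sandwichIntegrand K ρ' c q L t ≤ 1 - exp (-(K * (1 + (ρ' / L) * (exp t - 1) ^ q))) :=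
        mul_le_of_le_one_right
          ((one_sub_exp_neg_nonneg_s11 hK).trans (one_sub_exp_neg_le_one_sub_exp_neg_mul hK hy)) hB
    _ ≤ 1 - exp (-K) + K * (ρ' / L * (exp t - 1) ^ q) := one_sub_exp_neg_mul_le hK hy
    _ = 1 - exp (-K) + K * ρ' / L * (exp t - 1) ^ q := by ring
    _ ≤ 1 - exp (-K) + K * ρ' / L * exp (q * t) := by gcongr

theorem mul_log_le_integral_sandwichIntegrand {M : ℝ} (hK : 0 ≤ K) (hρ' : 0 ≤ ρ') (hc : 0 < c)
    (hq : 0 < q) (hL : 0 < L) (hM : 1 ≤ M) :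
    (1 - exp (-K)) * (1 - M⁻¹) * log (1 + (L / (c * M)) ^ q⁻¹) ≤
      ∫ t in Set.Ioi 0, sandwichIntegrand K ρ' c q L t := by
  have hy : 0 ≤ L / (c * M) := by positivity
  set τ := log (1 + (L / (c * M)) ^ q⁻¹)
  have hτ : 0 ≤ τ := log_nonneg (by linarith [rpow_nonneg hy q⁻¹])
  have hf := integrableOn_sandwichIntegrand (K := K) (ρ' := ρ') hc hq hL
  calc (1 - exp (-K)) * (1 - M⁻¹) * τ = ∫ _ in Set.Ioc 0 τ, (1 - exp (-K)) * (1 - M⁻¹) := by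
        rw [setIntegral_const, volume_real_Ioc_of_le hτ, smul_eq_mul, sub_zero, mul_comm]
    _ ≤ ∫ t in Set.Ioc 0 τ, sandwichIntegrand K ρ' c q L t := by
        refine setIntegral_mono_on (integrableOn_const measure_Ioc_lt_top.ne)
          (hf.mono_set Set.Ioc_subset_Ioi_self) measurableSet_Ioc fun t ht => ?_
        have hx := (rpow_exp_sub_one_le_iff hq hy ht.1.le).2 ht.2
        refine mul_le_sandwichIntegrand hK hρ' hL ht.1.le (inv_le_one_of_one_le₀ hM) ?_
        calc c / L * (exp t - 1) ^ q ≤ c / L * (L / (c * M)) := by gcongr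
          _ = M⁻¹ := by field_simp
    _ ≤ ∫ t in Set.Ioi 0, sandwichIntegrand K ρ' c q L t :=
        setIntegral_mono_set hf
          ((ae_restrict_iff' measurableSet_Ioi).2 (.of_forall fun _ ht =>
            sandwichIntegrand_nonneg hK hρ' hL (le_of_lt ht)))
          Set.Ioc_subset_Ioi_self.eventuallyLE

theorem integral_sandwichIntegrand_le (hK : 0 ≤ K) (hρ' : 0 ≤ ρ') (hc : 0 < c) (hq : 0 < q)
    (hL : 0 < L) (hcL : c ≤ L) :
    ∫ t in Set.Ioi 0, sandwichIntegrand K ρ' c q L t ≤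
      (1 - exp (-K)) * log (1 + (L / c) ^ q⁻¹) + K * ρ' * 2 ^ q / (c * q) := by
  have hy : 1 ≤ (L / c) ^ q⁻¹ := one_le_rpow ((one_le_div hc).2 hcL) (by positivity)
  set T := log (1 + (L / c) ^ q⁻¹)
  have hT : 0 ≤ T := log_nonneg (by linarith)
  have hexpT : exp (q * T) ≤ 2 ^ q * (L / c) := by
    rw [mul_comm, ← rpow_def_of_pos (by linarith)]
    calc (1 + (L / c) ^ q⁻¹) ^ q ≤ (2 * (L / c) ^ q⁻¹) ^ q := by gcongr; linarith
      _ = 2 ^ q * (L / c) := by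
        rw [mul_rpow zero_le_two (by positivity), rpow_inv_rpow (by positivity) hq.ne']
  have hf := integrableOn_sandwichIntegrand (K := K) (ρ' := ρ') hc hq hL
  have hconst : IntegrableOn (fun _ => 1 - exp (-K)) (Set.Ioc 0 T) :=
    integrableOn_const measure_Ioc_lt_top.ne
  have hexp : IntegrableOn (fun t => K * ρ' / L * exp (q * t)) (Set.Ioc 0 T) :=
    ((integrableOn_exp_mul_Iic hq T).mono_set Set.Ioc_subset_Iic_self).const_mul _
  calc ∫ t in Set.Ioi 0, sandwichIntegrand K ρ' c q L t
      = ∫ t in Set.Ioc 0 T, sandwichIntegrand K ρ' c q L t :=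
        setIntegral_eq_of_subset_of_forall_sdiff_eq_zero measurableSet_Ioi Set.Ioc_subset_Ioi_self
          fun _ ht => sandwichIntegrand_eq_zero hc hq hL (not_le.1 fun h => ht.2 ⟨ht.1, h⟩)
    _ ≤ ∫ t in Set.Ioc 0 T, (1 - exp (-K) + K * ρ' / L * exp (q * t)) :=
        setIntegral_mono_on (hf.mono_set Set.Ioc_subset_Ioi_self)
          (hconst.add hexp) measurableSet_Ioc
          fun t ht => sandwichIntegrand_le hK hρ' hc.le hq.le hL ht.1.le
    _ = (1 - exp (-K)) * T + K * ρ' / L * ∫ t in Set.Ioc 0 T, exp (q * t) := by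
        rw [integral_add hconst hexp, setIntegral_const, volume_real_Ioc_of_le hT,
          integral_const_mul, smul_eq_mul, sub_zero, mul_comm T]
    _ ≤ (1 - exp (-K)) * T + K * ρ' / L * (exp (q * T) / q) := by
        gcongr
        rw [← integral_exp_mul_Iic hq T]
        exact setIntegral_mono_set (integrableOn_exp_mul_Iic hq T)
          (.of_forall fun _ => (exp_pos _).le) Set.Ioc_subset_Iic_self.eventuallyLE
    _ ≤ (1 - exp (-K)) * T + K * ρ' / L * (2 ^ q * (L / c) / q) := by gcongr
    _ = (1 - exp (-K)) * T + K * ρ' * 2 ^ q / (c * q) := by field_simp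
end

theorem tendsto_div_log_of_le_of_le_integral_sandwichIntegrand {K ρ' c₁ c₂ q : ℝ} (hK : 0 ≤ K)
    (hρ' : 0 ≤ ρ') (hc₁ : 0 < c₁) (hc₂ : 0 < c₂) (hq : 0 < q) {γ : ℝ → ℝ}
    (hγ : ∀ᶠ L in atTop, (∫ t in Set.Ioi 0, sandwichIntegrand K ρ' c₁ q L t) ≤ γ L ∧
      γ L ≤ ∫ t in Set.Ioi 0, sandwichIntegrand K ρ' c₂ q L t) :
    Tendsto (fun L => γ L / log L) atTop (𝓝 (q⁻¹ * (1 - exp (-K)))) := by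
  set a := 1 - exp (-K)
  set C := K * ρ' * 2 ^ q / (c₂ * q)
  have hinvlog : Tendsto (fun L => (log L)⁻¹) atTop (𝓝 0) :=
    tendsto_log_atTop.inv_tendsto_atTop
  have hlower : Tendsto
      (fun L => a * (1 - (log L)⁻¹) * log (1 + (L / (c₁ * log L)) ^ q⁻¹) / log L) atTop
      (𝓝 (q⁻¹ * a)) := by
    have hb : Tendsto (fun L => log (c₁ * log L) / log L) atTop (𝓝 0) := by
      have h := (tendsto_const_nhds (x := log c₁)).div_atTop tendsto_log_atTop |>.add
        (isLittleO_log_id_atTop.tendsto_div_nhds_zero.comp tendsto_log_atTop)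
      rw [add_zero] at h
      refine h.congr' ?_
      filter_upwards [eventually_gt_atTop 1] with L hL
      rw [Function.comp_apply, id, log_mul hc₁.ne' (log_pos hL).ne', add_div]
    have hb0 : ∀ᶠ L in atTop, 0 < c₁ * log L :=
      (eventually_gt_atTop 1).mono fun L hL => mul_pos hc₁ (log_pos hL)
    have h := ((hinvlog.const_sub 1).const_mul a).mul
      (tendsto_log_one_add_div_rpow_div_log (inv_nonneg.2 hq.le) hb hb0)
    rw [sub_zero, mul_one, mul_comm] at h
    exact h.congr fun L => by ring
  have hupper : Tendsto (fun L => (a * log (1 + (L / c₂) ^ q⁻¹) + C) / log L)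
      atTop (𝓝 (q⁻¹ * a)) := by
    have hb : Tendsto (fun L => log c₂ / log L) atTop (𝓝 0) :=
      tendsto_const_nhds.div_atTop tendsto_log_atTop
    have h := ((tendsto_log_one_add_div_rpow_div_log (inv_nonneg.2 hq.le) hb
      (.of_forall fun _ => hc₂)).const_mul a).add (hinvlog.const_mul C)
    rw [mul_zero, add_zero, mul_comm] at h
    exact h.congr fun L => by ring
  have hsandwich : ∀ᶠ L in atTop,
      a * (1 - (log L)⁻¹) * log (1 + (L / (c₁ * log L)) ^ q⁻¹) / log L ≤ γ L / log L ∧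
      γ L / log L ≤ (a * log (1 + (L / c₂) ^ q⁻¹) + C) / log L := by
    filter_upwards [hγ, eventually_ge_atTop (exp 1), eventually_ge_atTop c₂]
      with L ⟨hγ₁, hγ₂⟩ hLe hLc₂
    have hL : 0 < L := (exp_pos 1).trans_le hLe
    have hlogL : 1 ≤ log L := by rwa [le_log_iff_exp_le hL]
    refine ⟨div_le_div_of_nonneg_right ?_ (by linarith),
      div_le_div_of_nonneg_right ?_ (by linarith)⟩
    · exact (mul_log_le_integral_sandwichIntegrand hK hρ' hc₁ hq hL hlogL).trans hγ₁
    · exact hγ₂.trans (integral_sandwichIntegrand_le hK hρ' hc₂ hq hL hLc₂)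
  exact tendsto_of_tendsto_of_tendsto_of_le_of_le' hlower hupper
    (hsandwich.mono fun _ h => h.1) (hsandwich.mono fun _ h => h.2)

theorem stmt_11_general (α K ρ' c₁ c₂ L₀ : ℝ) (hα : 2 < α) (hK : 0 < K) (hρ' : 0 ≤ ρ')
    (hc₂ : 0 < c₂) (hc₁₂ : c₂ ≤ c₁) (γ : ℝ → ℝ)
    (hγ : ∀ L, L₀ ≤ L →
      (∫ t in Set.Ioi (0:ℝ),
          (1 - Real.exp (-(K * (1 + (ρ' / L) * (Real.exp t - 1) ^ (2 / α))))) *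
            max 0 (1 - (c₁ / L) * (Real.exp t - 1) ^ (2 / α))) ≤ γ L ∧
      γ L ≤ ∫ t in Set.Ioi (0:ℝ),
          (1 - Real.exp (-(K * (1 + (ρ' / L) * (Real.exp t - 1) ^ (2 / α))))) *
            max 0 (1 - (c₂ / L) * (Real.exp t - 1) ^ (2 / α))) :
    Tendsto (fun L => γ L / Real.log L) atTop (nhds ((α / 2) * (1 - Real.exp (-K)))) := by
  have h := tendsto_div_log_of_le_of_le_integral_sandwichIntegrand hK.le hρ'
    (hc₂.trans_le hc₁₂) hc₂ (by positivity : 0 < 2 / α) (γ := γ)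
    ((eventually_ge_atTop L₀).mono hγ)
  rwa [inv_div] at h

/-- Theorem 2 (asymptotic mmW UDN spectral efficiency). With `α > 2`, `K > 0`, `ρ' ≥ 0`,
`c₁ ≥ c₂ > 0`, `L₀ > 1`, if `γ` is sandwiched for all `L ≥ L₀` between
`f_i(L) := ∫₀^∞ (1 − e^{−K(1 + (ρ'/L)(e^t − 1)^{2/α})}) · max(0, 1 − (c_i/L)(e^t − 1)^{2/α}) dt`,
`i = 1, 2`, then `γ(L)/log L → (α/2)(1 − e^{−K})` as `L → ∞`. -/
theorem stmt_11 (α K ρ' c₁ c₂ L₀ : ℝ) (hα : 2 < α) (hK : 0 < K) (hρ' : 0 ≤ ρ')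
    (hc₂ : 0 < c₂) (hc₁₂ : c₂ ≤ c₁) (hL₀ : 1 < L₀) (γ : ℝ → ℝ)
    (hγ : ∀ L, L₀ ≤ L →
      (∫ t in Set.Ioi (0:ℝ),
          (1 - Real.exp (-(K * (1 + (ρ' / L) * (Real.exp t - 1) ^ (2 / α))))) *
            max 0 (1 - (c₁ / L) * (Real.exp t - 1) ^ (2 / α))) ≤ γ L ∧
      γ L ≤ ∫ t in Set.Ioi (0:ℝ),
          (1 - Real.exp (-(K * (1 + (ρ' / L) * (Real.exp t - 1) ^ (2 / α))))) *
            max 0 (1 - (c₂ / L) * (Real.exp t - 1) ^ (2 / α))) :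
    Tendsto (fun L => γ L / Real.log L) atTop (nhds ((α / 2) * (1 - Real.exp (-K)))) :=
  stmt_11_general α K ρ' c₁ c₂ L₀ hα hK hρ' hc₂ hc₁₂ γ hγ
end

section
/- Fix reals W_μ, W_m > 0, γ_μ, γ_m > 0, W_mu ∈ [0, W_m] and ζ > 0, and for x ∈ ℝ set R_u(x) = x·γ_μ + W_mu·γ_m, R_d(x) = (W_μ − x)·γ_μ + (W_m − W_mu)·γ_m, and S = W_μ·γ_μ + W_m·γ_m. Assume the feasibility conditions R_u(0) ≤ ζ·R_d(0) and R_u(W_μ) ≥ ζ·R_d(W_μ). Then S/(1 + ζ) is the greatest element of the set { R_d(x) : x ∈ [0, W_μ], R_u(x) ≥ ζ·R_d(x) }, and it is attained at the unique x* ∈ [0, W_μ] satisfying R_u(x*) = ζ·R_d(x*). -/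
/-- Under the feasibility conditions `R_u(0) ≤ ζ R_d(0)` and `R_u(W_μ) ≥ ζ R_d(W_μ)`,
`S/(1 + ζ)` is the greatest element of `{ R_d(x) : x ∈ [0, W_μ], R_u(x) ≥ ζ R_d(x) }`, and it is
attained at the unique `x* ∈ [0, W_μ]` with `R_u(x*) = ζ R_d(x*)`. -/
theorem stmt_13 (Wμ Wm γμ γm Wmu ζ : ℝ) (hWμ : 0 < Wμ) (hWm : 0 < Wm)
    (hγμ : 0 < γμ) (hγm : 0 < γm) (hWmu : Wmu ∈ Set.Icc (0:ℝ) Wm) (hζ : 0 < ζ)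
    (Ru Rd : ℝ → ℝ)
    (hRu : ∀ x, Ru x = x * γμ + Wmu * γm)
    (hRd : ∀ x, Rd x = (Wμ - x) * γμ + (Wm - Wmu) * γm)
    (hfeas0 : Ru 0 ≤ ζ * Rd 0) (hfeas1 : ζ * Rd Wμ ≤ Ru Wμ) :
    IsGreatest {y : ℝ | ∃ x ∈ Set.Icc (0:ℝ) Wμ, ζ * Rd x ≤ Ru x ∧ y = Rd x}
      ((Wμ * γμ + Wm * γm) / (1 + ζ)) ∧
    ∃! x : ℝ, x ∈ Set.Icc (0:ℝ) Wμ ∧ Ru x = ζ * Rd x ∧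
      Rd x = (Wμ * γμ + Wm * γm) / (1 + ζ) := by
  have h1ζ : (0:ℝ) < 1 + ζ := by linarith
  rw [hRu 0, hRd 0] at hfeas0
  rw [hRu Wμ, hRd Wμ] at hfeas1
  set x₀ : ℝ := (ζ*Wμ*γμ + ζ*(Wm-Wmu)*γm - Wmu*γm)/((1+ζ)*γμ) with hx₀
  have hden : ((1:ℝ)+ζ)*γμ ≠ 0 := by positivity
  have hx0 : 0 ≤ x₀ := by
    apply div_nonneg _ (by positivity)
    nlinarith
  have hx1 : x₀ ≤ Wμ := by
    rw [div_le_iff₀ (by positivity)]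
    nlinarith
  have heq : Ru x₀ = ζ * Rd x₀ := by
    rw [hRu, hRd, hx₀]
    field_simp
    ring
  have hRdval : Rd x₀ = (Wμ * γμ + Wm * γm) / (1 + ζ) := by
    rw [hRd, hx₀, eq_div_iff (ne_of_gt h1ζ)]
    field_simp
    ring
  refine ⟨⟨⟨x₀, ⟨hx0, hx1⟩, le_of_eq heq.symm, hRdval.symm⟩, ?_⟩,
    ⟨x₀, ⟨⟨hx0, hx1⟩, heq, hRdval⟩, ?_⟩⟩
  · rintro y ⟨x, hx, hcon, rfl⟩
    rw [hRu, hRd] at hcon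
    rw [hRd, le_div_iff₀ h1ζ]
    nlinarith
  · rintro x ⟨hx, hxeq, -⟩
    rw [hRu, hRd] at hxeq
    rw [hx₀, eq_div_iff hden]
    nlinarith
end

section
/- (Maximum DL UDN rate, Proposition 3.) Fix reals α_μ, α_m > 2, C_L ∈ (0, 1], ζ > 0, W_μ, W_m > 0, W_mu ∈ [0, W_m], and density ratios λ̂_μ, λ̂_m > 1, and set γ_μ = (α_μ/2)·log λ̂_μ and γ_m = (α_m·C_L/2)·log λ̂_m. For x ∈ ℝ let R_u(x) = x·γ_μ + W_mu·γ_m and R_d(x) = (W_μ − x)·γ_μ + (W_m − W_mu)·γ_m, and assume the feasibility conditions R_u(0) ≤ ζ·R_d(0) and R_u(W_μ) ≥ ζ·R_d(W_μ). Then the greatest value of R_d(x) over { x ∈ [0, W_μ] : R_u(x) ≥ ζ·R_d(x) } equals R_d* = (1/(2(1 + ζ))) · (α_m·C_L·W_m·log λ̂_m + α_μ·W_μ·log λ̂_μ) = (1/(2(1 + ζ))) · log( λ̂_m^{α_m C_L W_m} · λ̂_μ^{α_μ W_μ} ). -/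
/-!
Whatever the split `x`, the UL and DL rates add up to the fixed total `S = W_μ γ_μ + W_m γ_m`,
so the ratio constraint `ζ R_d ≤ R_u` says exactly `R_d ≤ S / (1 + ζ)`. The two feasibility
conditions put `S / (1 + ζ)` between `R_d (W_μ)` and `R_d 0`, so by the intermediate value
theorem the continuous `R_d` attains this bound on `[0, W_μ]`.
-/

open Set

section RateSplit

variable {f g : ℝ → ℝ} {S ζ : ℝ}

theorem mul_le_iff_le_div_one_add (hζ : 0 < 1 + ζ) (hsum : ∀ x, f x + g x = S) (x : ℝ) :
    ζ * g x ≤ f x ↔ g x ≤ S / (1 + ζ) := by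
  rw [le_div_iff₀ hζ, ← hsum x]
  constructor <;> intro h <;> linarith

theorem le_mul_iff_div_one_add_le (hζ : 0 < 1 + ζ) (hsum : ∀ x, f x + g x = S) (x : ℝ) :
    f x ≤ ζ * g x ↔ S / (1 + ζ) ≤ g x := by
  rw [div_le_iff₀ hζ, ← hsum x]
  constructor <;> intro h <;> linarith

theorem isGreatest_of_add_eq_const {a b : ℝ} (hab : a ≤ b) (hg : ContinuousOn g (Icc a b))
    (hζ : 0 < 1 + ζ) (hsum : ∀ x, f x + g x = S) (ha : f a ≤ ζ * g a) (hb : ζ * g b ≤ f b) :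
    IsGreatest {y | ∃ x ∈ Icc a b, ζ * g x ≤ f x ∧ y = g x} (S / (1 + ζ)) := by
  have hbound := mul_le_iff_le_div_one_add hζ hsum
  refine ⟨?_, ?_⟩
  · obtain ⟨x, hx, hgx⟩ := intermediate_value_Icc' hab hg
      ⟨(hbound b).1 hb, (le_mul_iff_div_one_add_le hζ hsum a).1 ha⟩
    exact ⟨x, hx, (hbound x).2 hgx.le, hgx.symm⟩
  · rintro _ ⟨x, -, hx, rfl⟩
    exact (hbound x).1 hx

end RateSplit

theorem stmt_14_general (αμ αm CL ζ Wμ Wm Wmu Lμ Lm : ℝ)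
    (hζ : 0 < ζ) (hWμ : 0 < Wμ)
    (hLμ : 1 < Lμ) (hLm : 1 < Lm)
    (γμ γm : ℝ) (hγμ : γμ = αμ / 2 * Real.log Lμ) (hγm : γm = αm * CL / 2 * Real.log Lm)
    (Ru Rd : ℝ → ℝ)
    (hRu : ∀ x, Ru x = x * γμ + Wmu * γm)
    (hRd : ∀ x, Rd x = (Wμ - x) * γμ + (Wm - Wmu) * γm)
    (hfeas0 : Ru 0 ≤ ζ * Rd 0) (hfeas1 : ζ * Rd Wμ ≤ Ru Wμ) :
    IsGreatest {y : ℝ | ∃ x ∈ Set.Icc (0:ℝ) Wμ, ζ * Rd x ≤ Ru x ∧ y = Rd x}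
      (1 / (2 * (1 + ζ)) * (αm * CL * Wm * Real.log Lm + αμ * Wμ * Real.log Lμ)) ∧
    1 / (2 * (1 + ζ)) * (αm * CL * Wm * Real.log Lm + αμ * Wμ * Real.log Lμ) =
      1 / (2 * (1 + ζ)) * Real.log (Lm ^ (αm * CL * Wm) * Lμ ^ (αμ * Wμ)) := by
  have hζ' : 0 < 1 + ζ := by linarith
  have hsum : ∀ x, Ru x + Rd x = Wμ * γμ + Wm * γm := fun x => by rw [hRu, hRd]; ring
  have hRd_cont : Continuous Rd := by rw [funext hRd]; fun_prop
  have hmax := isGreatest_of_add_eq_const hWμ.le hRd_cont.continuousOn hζ' hsum hfeas0 hfeas1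
  have hS : (Wμ * γμ + Wm * γm) / (1 + ζ) =
      1 / (2 * (1 + ζ)) * (αm * CL * Wm * Real.log Lm + αμ * Wμ * Real.log Lμ) := by
    rw [hγμ, hγm]; field_simp; ring
  refine ⟨hS ▸ hmax, ?_⟩
  have hLμ0 : 0 < Lμ := by linarith
  have hLm0 : 0 < Lm := by linarith
  rw [Real.log_mul (by positivity) (by positivity), Real.log_rpow hLm0, Real.log_rpow hLμ0]

/-- Proposition 3 (maximum DL UDN rate). With `γ_μ = (α_μ/2) log λ̂_μ`,
`γ_m = (α_m C_L/2) log λ̂_m`, and feasibility, the greatest value of `R_d` over the feasible set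
equals `R_d* = (1/(2(1+ζ))) (α_m C_L W_m log λ̂_m + α_μ W_μ log λ̂_μ)
= (1/(2(1+ζ))) log(λ̂_m^{α_m C_L W_m} λ̂_μ^{α_μ W_μ})`. -/
theorem stmt_14 (αμ αm CL ζ Wμ Wm Wmu Lμ Lm : ℝ)
    (hαμ : 2 < αμ) (hαm : 2 < αm) (hCL : CL ∈ Set.Ioc (0:ℝ) 1) (hζ : 0 < ζ)
    (hWμ : 0 < Wμ) (hWm : 0 < Wm) (hWmu : Wmu ∈ Set.Icc (0:ℝ) Wm)
    (hLμ : 1 < Lμ) (hLm : 1 < Lm)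
    (γμ γm : ℝ) (hγμ : γμ = αμ / 2 * Real.log Lμ) (hγm : γm = αm * CL / 2 * Real.log Lm)
    (Ru Rd : ℝ → ℝ)
    (hRu : ∀ x, Ru x = x * γμ + Wmu * γm)
    (hRd : ∀ x, Rd x = (Wμ - x) * γμ + (Wm - Wmu) * γm)
    (hfeas0 : Ru 0 ≤ ζ * Rd 0) (hfeas1 : ζ * Rd Wμ ≤ Ru Wμ) :
    IsGreatest {y : ℝ | ∃ x ∈ Set.Icc (0:ℝ) Wμ, ζ * Rd x ≤ Ru x ∧ y = Rd x}
      (1 / (2 * (1 + ζ)) * (αm * CL * Wm * Real.log Lm + αμ * Wμ * Real.log Lμ)) ∧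
    1 / (2 * (1 + ζ)) * (αm * CL * Wm * Real.log Lm + αμ * Wμ * Real.log Lμ) =
      1 / (2 * (1 + ζ)) * Real.log (Lm ^ (αm * CL * Wm) * Lμ ^ (αμ * Wμ)) :=
  stmt_14_general αμ αm CL ζ Wμ Wm Wmu Lμ Lm hζ hWμ hLμ hLm γμ γm hγμ hγm Ru Rd hRu hRd hfeas0
    hfeas1
end
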